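/- (Lemma 2) Suppose two parent particles of invariant masses m₁ and m₂ are produced; for each n ∈ {1,2}, parent n has four-momentum equal to the sum of a visible four-momentum (E_v⁽ⁿ⁾, p_v⁽ⁿ⁾) and an invisible four-momentum (E_i⁽ⁿ⁾, p_i⁽ⁿ⁾), all four daughter four-momenta being causal (E ≥ |p|). Let m_v⁽ⁿ⁾ and vT⁽ⁿ⁾ be the invariant mass and transverse momentum of visible system n, and let pTmiss be the sum of the transverse momenta of the two invisible four-momenta. Then mT2(v₁, v₂, pTmiss, 0, 0) ≤ max(m₁, m₂). -/

import Mathlib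

/-! Splitting off the longitudinal components `z`, the squared parent mass exceeds the squared
transverse mass (massless invisible hypothesis, true invisible momentum `q_T`) by the invisible
mass squared plus `2 (Ev Ei - zv zi - √(Ev² - zv²) ‖q_T‖)`. The bracket is nonnegative by the
reverse Cauchy–Schwarz inequality `√(a² - b²) √(c² - d²) ≤ a c - b d` in the `(E, z)` plane.
Since the true split of `pTmiss` is one admissible partition, `mT2` is at most the larger of the
two parent masses. -/

open scoped RealInnerProductSpace

/-- Transverse energy `e(m,p) = √(m² + |p|²)`. -/
noncomputable def transverseEnergy (m : ℝ) (p : EuclideanSpace ℝ (Fin 2)) : ℝ :=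
  Real.sqrt (m ^ 2 + ‖p‖ ^ 2)

/-- Transverse mass `m_T(m_v, vT, m_i, qT)`. -/
noncomputable def transverseMass (mv : ℝ) (vT : EuclideanSpace ℝ (Fin 2))
    (mi : ℝ) (qT : EuclideanSpace ℝ (Fin 2)) : ℝ :=
  Real.sqrt (mv ^ 2 + mi ^ 2 +
    2 * (transverseEnergy mv vT * transverseEnergy mi qT - ⟪vT, qT⟫))

/-- `mT2(v₁, v₂, pTmiss, m_i⁽¹⁾, m_i⁽²⁾)`: the infimum over all partitions
`qT⁽¹⁾ + qT⁽²⁾ = pTmiss` of the larger of the two transverse masses. -/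
noncomputable def mT2 (mv1 : ℝ) (vT1 : EuclideanSpace ℝ (Fin 2))
    (mv2 : ℝ) (vT2 : EuclideanSpace ℝ (Fin 2))
    (ptmiss : EuclideanSpace ℝ (Fin 2)) (mi1 mi2 : ℝ) : ℝ :=
  sInf {r : ℝ | ∃ q1 q2 : EuclideanSpace ℝ (Fin 2), q1 + q2 = ptmiss ∧
    r = max (transverseMass mv1 vT1 mi1 q1) (transverseMass mv2 vT2 mi2 q2)}

/-- Projection of a 3-momentum onto the transverse plane (first two coordinates). -/
noncomputable def projT (p : EuclideanSpace ℝ (Fin 3)) : EuclideanSpace ℝ (Fin 2) :=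
  WithLp.toLp 2 (fun i : Fin 2 => p i.castSucc)

/-- Invariant mass `√(E² − |p|²)` of a 3+1 four-momentum `(E, p)`. -/
noncomputable def invariantMass (E : ℝ) (p : EuclideanSpace ℝ (Fin 3)) : ℝ :=
  Real.sqrt (E ^ 2 - ‖p‖ ^ 2)

theorem sqrt_sq_sub_sq_mul_sqrt_sq_sub_sq_le {a b c d : ℝ} (hb : |b| ≤ a) (hd : |d| ≤ c) :
    √(a ^ 2 - b ^ 2) * √(c ^ 2 - d ^ 2) ≤ a * c - b * d := by
  have hbd : b * d ≤ a * c :=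
    (le_abs_self _).trans (abs_mul b d ▸ mul_le_mul hb hd (abs_nonneg d) ((abs_nonneg b).trans hb))
  rw [← Real.sqrt_mul' _ (by nlinarith [sq_abs d, abs_nonneg d]), Real.sqrt_le_left (by linarith)]
  nlinarith [sq_nonneg (a * d - b * c)]

theorem norm_sq_eq_norm_projT_sq_add (p : EuclideanSpace ℝ (Fin 3)) :
    ‖p‖ ^ 2 = ‖projT p‖ ^ 2 + p 2 ^ 2 := by
  simp [EuclideanSpace.norm_sq_eq, Fin.sum_univ_three, Fin.sum_univ_two, projT]

theorem inner_eq_inner_projT_add (p q : EuclideanSpace ℝ (Fin 3)) :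
    ⟪p, q⟫ = ⟪projT p, projT q⟫ + p 2 * q 2 := by
  simp [PiLp.inner_apply, Fin.sum_univ_three, Fin.sum_univ_two, projT, mul_comm]

theorem EuclideanSpace.abs_apply_le_of_norm_le {ι : Type*} [Fintype ι] {E : ℝ}
    {p : EuclideanSpace ℝ ι} (h : ‖p‖ ≤ E) (i : ι) : |p i| ≤ E :=
  (Real.norm_eq_abs (p i) ▸ PiLp.norm_apply_le p i).trans h

section Causal

variable {E : ℝ} {p : EuclideanSpace ℝ (Fin 3)}

theorem norm_projT_le_of_norm_le (h : ‖p‖ ≤ E) : ‖projT p‖ ≤ √(E ^ 2 - p 2 ^ 2) :=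
  Real.le_sqrt_of_sq_le <| by
    nlinarith [norm_sq_eq_norm_projT_sq_add p, norm_nonneg p]

theorem invariantMass_sq (h : ‖p‖ ≤ E) : invariantMass E p ^ 2 = E ^ 2 - ‖p‖ ^ 2 :=
  Real.sq_sqrt <| by nlinarith [norm_nonneg p]

theorem transverseEnergy_invariantMass_projT (h : ‖p‖ ≤ E) :
    transverseEnergy (invariantMass E p) (projT p) = √(E ^ 2 - p 2 ^ 2) := by
  rw [transverseEnergy, invariantMass_sq h, norm_sq_eq_norm_projT_sq_add p]
  ring_nf

end Causal

theorem transverseEnergy_zero (q : EuclideanSpace ℝ (Fin 2)) : transverseEnergy 0 q = ‖q‖ := by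
  simp [transverseEnergy]

theorem transverseMass_le_invariantMass {Ev Ei : ℝ} {pv pinv : EuclideanSpace ℝ (Fin 3)}
    (hv : ‖pv‖ ≤ Ev) (hi : ‖pinv‖ ≤ Ei) :
    transverseMass (invariantMass Ev pv) (projT pv) 0 (projT pinv) ≤
      invariantMass (Ev + Ei) (pv + pinv) := by
  have hplane : √(Ev ^ 2 - pv 2 ^ 2) * ‖projT pinv‖ ≤ Ev * Ei - pv 2 * pinv 2 :=
    (mul_le_mul_of_nonneg_left (norm_projT_le_of_norm_le hi) (Real.sqrt_nonneg _)).trans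
      (sqrt_sq_sub_sq_mul_sqrt_sq_sub_sq_le (EuclideanSpace.abs_apply_le_of_norm_le hv 2)
        (EuclideanSpace.abs_apply_le_of_norm_le hi 2))
  rw [transverseMass, transverseEnergy_invariantMass_projT hv, transverseEnergy_zero,
    invariantMass_sq hv, invariantMass]
  apply Real.sqrt_le_sqrt
  rw [norm_add_sq_real, inner_eq_inner_projT_add]
  nlinarith [pow_le_pow_left₀ (norm_nonneg _) hi 2]

theorem mT2_le_max_transverseMass {mv1 mv2 mi1 mi2 : ℝ}
    {vT1 vT2 ptmiss q1 q2 : EuclideanSpace ℝ (Fin 2)}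
    (hq : q1 + q2 = ptmiss) :
    mT2 mv1 vT1 mv2 vT2 ptmiss mi1 mi2 ≤
      max (transverseMass mv1 vT1 mi1 q1) (transverseMass mv2 vT2 mi2 q2) :=
  csInf_le ⟨0, by rintro r ⟨q1, q2, -, rfl⟩; exact le_max_of_le_left (Real.sqrt_nonneg _)⟩
    ⟨q1, q2, hq, rfl⟩

/-- Lemma 2: for pair production of two parents of masses `m₁`, `m₂`,
each decaying to a visible and an invisible system,
`mT2(v₁, v₂, pTmiss, 0, 0) ≤ max(m₁, m₂)`. -/
theorem mT2_le_max_parent_masses (m : Fin 2 → ℝ) (Ev Ei : Fin 2 → ℝ)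
    (pv pinv : Fin 2 → EuclideanSpace ℝ (Fin 3))
    (hv : ∀ n, ‖pv n‖ ≤ Ev n) (hi : ∀ n, ‖pinv n‖ ≤ Ei n)
    (hm : ∀ n, invariantMass (Ev n + Ei n) (pv n + pinv n) = m n) :
    mT2 (invariantMass (Ev 0) (pv 0)) (projT (pv 0))
        (invariantMass (Ev 1) (pv 1)) (projT (pv 1))
        (projT (pinv 0) + projT (pinv 1)) 0 0 ≤ max (m 0) (m 1) := by
  rw [← hm 0, ← hm 1]
  exact (mT2_le_max_transverseMass rfl).trans <|
    max_le_max (transverseMass_le_invariantMass (hv 0) (hi 0))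
      (transverseMass_le_invariantMass (hv 1) (hi 1))
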